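/- Let P₀, Q₀ be probability measures on ℝ^d and U, V probability measures on ℝ^d whose characteristic functions are strictly positive real numbers at every ω ∈ ℝ^d. Suppose the distribution μ of X − Y, for independent X ∼ P₀⋆U and Y ∼ Q₀⋆V, has characteristic function that is a strictly positive real number at every ω ∈ ℝ^d. Then for every ω ∈ ℝ^d, φ_{P₀}(ω) ≠ 0, φ_{Q₀}(ω) ≠ 0, and the phase functions agree: φ_{P₀}(ω)/|φ_{P₀}(ω)| = φ_{Q₀}(ω)/|φ_{Q₀}(ω)|. -/

import Mathlib

open MeasureTheory RealInnerProductSpace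

/-- The characteristic function of a measure `P` on `ℝ^d`. -/
noncomputable def charFun {d : ℕ} (P : Measure (EuclideanSpace ℝ (Fin d)))
    (ω : EuclideanSpace ℝ (Fin d)) : ℂ :=
  ∫ x, Complex.exp (Complex.I * (⟪ω, x⟫ : ℝ)) ∂P

/-- The phase function of a measure `P` on `ℝ^d`. -/
noncomputable def phase {d : ℕ} (P : Measure (EuclideanSpace ℝ (Fin d)))
    (ω : EuclideanSpace ℝ (Fin d)) : ℂ :=
  _root_.charFun P ω / ((‖_root_.charFun P ω‖ : ℝ) : ℂ)

/-!
Characteristic functions turn convolution into multiplication and negation into complex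
conjugation, so `φ_μ = φ_{P₀} · conj φ_{Q₀} · φ_U · φ_V`. Dividing by the positive reals `φ_U`,
`φ_V` shows `φ_{P₀} · conj φ_{Q₀} > 0`, i.e. `φ_{P₀}` is a positive real multiple of `φ_{Q₀}`,
and positive multiples have the same phase.
-/

open ComplexConjugate

namespace Complex

lemma div_norm_ofReal_mul {c : ℝ} (hc : 0 < c) (z : ℂ) : c * z / ‖(c : ℂ) * z‖ = z / ‖z‖ := by
  rw [norm_mul, norm_real, Real.norm_of_nonneg hc.le, ofReal_mul,
    mul_div_mul_left _ _ (ofReal_ne_zero.mpr hc.ne')]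

lemma div_norm_eq_of_mul_conj_eq_pos {a b : ℂ} {s : ℝ} (hs : 0 < s) (h : a * conj b = s) :
    a ≠ 0 ∧ b ≠ 0 ∧ a / ‖a‖ = b / ‖b‖ := by
  have hs' : (s : ℂ) ≠ 0 := ofReal_ne_zero.mpr hs.ne'
  have ha : a ≠ 0 := by rintro rfl; simp [eq_comm, hs'] at h
  have hb : b ≠ 0 := by rintro rfl; simp [eq_comm, hs'] at h
  have hab : a = (s / ‖b‖ ^ 2 : ℝ) * b := by
    have hb2 : ((‖b‖ ^ 2 : ℝ) : ℂ) ≠ 0 := by simpa using hb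
    have : a * ((‖b‖ ^ 2 : ℝ) : ℂ) = s * b := by
      rw [ofReal_pow, ← mul_conj', ← h]; ring
    rw [ofReal_div, div_mul_eq_mul_div, eq_div_iff hb2, ← this]
  refine ⟨ha, hb, ?_⟩
  rw [hab, div_norm_ofReal_mul (by positivity)]

end Complex

lemma charFun_eq_measureTheory_charFun {d : ℕ} (P : Measure (EuclideanSpace ℝ (Fin d))) :
    _root_.charFun P = MeasureTheory.charFun P := by
  ext ω
  simp only [_root_.charFun, MeasureTheory.charFun_apply, real_inner_comm ω, mul_comm Complex.I]

lemma charFun_conv {d : ℕ} (P Q : Measure (EuclideanSpace ℝ (Fin d)))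
    [IsFiniteMeasure P] [IsFiniteMeasure Q] (ω : EuclideanSpace ℝ (Fin d)) :
    _root_.charFun (P.conv Q) ω = _root_.charFun P ω * _root_.charFun Q ω := by
  simp only [charFun_eq_measureTheory_charFun]
  exact MeasureTheory.charFun_conv ω

lemma charFun_map_neg {d : ℕ} (P : Measure (EuclideanSpace ℝ (Fin d)))
    (ω : EuclideanSpace ℝ (Fin d)) :
    _root_.charFun (P.map (fun x => -x)) ω = conj (_root_.charFun P ω) := by
  have hneg : (fun x : EuclideanSpace ℝ (Fin d) => -x) = ((-1 : ℝ) • ·) := by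
    funext x; rw [neg_one_smul]
  rw [charFun_eq_measureTheory_charFun, charFun_eq_measureTheory_charFun, hneg, charFun_map_smul,
    neg_one_smul, MeasureTheory.charFun_neg]

/-- If `U`, `V` are SPD components and the distribution `μ` of `X − Y`, for independent
`X ∼ P₀⋆U`, `Y ∼ Q₀⋆V`, is an SPD component, then `φ_{P₀}` and `φ_{Q₀}` never vanish and
the phase functions of `P₀` and `Q₀` agree everywhere. -/
theorem stmt_12 {d : ℕ} (P₀ Q₀ U V : Measure (EuclideanSpace ℝ (Fin d)))
    [IsProbabilityMeasure P₀] [IsProbabilityMeasure Q₀]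
    [IsProbabilityMeasure U] [IsProbabilityMeasure V]
    (hU : ∀ ω : EuclideanSpace ℝ (Fin d), ∃ r : ℝ, 0 < r ∧ _root_.charFun U ω = (r : ℂ))
    (hV : ∀ ω : EuclideanSpace ℝ (Fin d), ∃ r : ℝ, 0 < r ∧ _root_.charFun V ω = (r : ℂ))
    (μ : Measure (EuclideanSpace ℝ (Fin d)))
    (hμ : μ = (P₀.conv U).conv ((Q₀.conv V).map (fun x => -x)))
    (hSPD : ∀ ω : EuclideanSpace ℝ (Fin d), ∃ r : ℝ, 0 < r ∧ _root_.charFun μ ω = (r : ℂ)) :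
    ∀ ω : EuclideanSpace ℝ (Fin d),
      _root_.charFun P₀ ω ≠ 0 ∧ _root_.charFun Q₀ ω ≠ 0 ∧ phase P₀ ω = phase Q₀ ω := by
  intro ω
  obtain ⟨u, hu, hUω⟩ := hU ω
  obtain ⟨v, hv, hVω⟩ := hV ω
  obtain ⟨r, hr, hμω⟩ := hSPD ω
  rw [hμ, charFun_conv, charFun_map_neg, charFun_conv, charFun_conv, hUω, hVω, map_mul,
    Complex.conj_ofReal] at hμω
  have hphase : _root_.charFun P₀ ω * conj (_root_.charFun Q₀ ω) = (r / (u * v) : ℝ) := by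
    have huv : ((u * v : ℝ) : ℂ) ≠ 0 := by exact_mod_cast (mul_pos hu hv).ne'
    rw [Complex.ofReal_div, eq_div_iff huv, ← hμω]
    push_cast
    ring
  exact Complex.div_norm_eq_of_mul_conj_eq_pos (by positivity) hphase
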